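/- arXiv:1305.5915 — 4 statements merged into one kernel-verified Lean document; each statement's English description precedes it below -/
import Mathlib

section
/- Let X be continuous with continuous quadratic variation [X] along grids (T_N), and let φ : [0,∞) → ℝ be continuous. Then for every t > 0, ∑_{t_i, t_{i+1} ∈ T_N, t_{i+1} ≤ t} φ(t_i)(X_{t_{i+1}} − X_{t_i})² converges to the Lebesgue–Stieltjes integral ∫_0^t φ(s) d[X]_s as N → ∞. -/
open Filter Topology Set MeasureTheory

/-- A refining sequence of time grids: each grid is a strictly increasing
sequence starting at 0 and tending to infinity; grids are nested and the
mesh tends to zero. -/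
structure GridSeq where
  T : ℕ → ℕ → ℝ
  zero : ∀ N, T N 0 = 0
  mono : ∀ N, StrictMono (T N)
  unbounded : ∀ N, Filter.Tendsto (T N) Filter.atTop Filter.atTop
  nested : ∀ N, Set.range (T N) ⊆ Set.range (T (N + 1))
  mesh : ∀ ε > 0, ∃ N₀, ∀ N ≥ N₀, ∀ i, T N (i + 1) - T N i ≤ ε

/-- The grid sum `∑_{t_i, t_{i+1} ∈ τ, t_{i+1} ≤ t} f(t_i, t_{i+1})`. -/
noncomputable def gridSum (τ : ℕ → ℝ) (f : ℝ → ℝ → ℝ) (t : ℝ) : ℝ :=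
  ∑' i : ℕ, if τ (i + 1) ≤ t then f (τ i) (τ (i + 1)) else 0

def ConvTo (G : GridSeq) (f : ℝ → ℝ → ℝ) (t L : ℝ) : Prop :=
  Filter.Tendsto (fun N => gridSum (G.T N) f t) Filter.atTop (nhds L)

def HasQV (G : GridSeq) (X Q : ℝ → ℝ) : Prop :=
  ContinuousOn Q (Set.Ici 0) ∧ Q 0 = 0 ∧
    ∀ t, ConvTo G (fun u v => (X v - X u) ^ 2) t (Q t)

def LocBV (A : ℝ → ℝ) : Prop := ∀ T > 0, BoundedVariationOn A (Set.Icc 0 T)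

/-- `ξ` is an admissible integrand for `X`: locally `ξ_t = g(A_t, X_t)` with
`g ∈ C¹` and `A` continuous of finite variation. -/
def Admissible (X ξ : ℝ → ℝ) : Prop :=
  ∀ T > 0, ∃ (n : ℕ) (g : (Fin n → ℝ) → ℝ → ℝ) (A : ℝ → Fin n → ℝ),
    ContDiff ℝ 1 (Function.uncurry g) ∧
    (∀ k, ContinuousOn (fun t => A t k) (Set.Icc 0 T) ∧
      BoundedVariationOn (fun t => A t k) (Set.Icc 0 T)) ∧
    ∀ t ∈ Set.Icc (0 : ℝ) T, ξ t = g (A t) (X t)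

/-!
Fix a partition `0 = s₀ < ⋯ < sₘ = t` finer than a modulus of uniform continuity of `φ` on
`[0, t]` for the tolerance `ε`. Sorting the grid increments by the partition interval that contains
their right endpoint `tᵢ₊₁` replaces `φ(tᵢ)` by `φ(sⱼ)` at a cost of at most `ε ∑ (ΔX)²` once the
grid mesh is small, so the weighted sum is close to `∑ⱼ φ(sⱼ) ([X]ᴺ_{sⱼ₊₁} - [X]ᴺ_{sⱼ})`. As
`N → ∞` this coarse sum tends to the Riemann–Stieltjes sum `∑ⱼ φ(sⱼ) ([X]_{sⱼ₊₁} - [X]_{sⱼ})`,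
which differs from `∫_{(0,t]} φ d[X]` by at most `ε [X]_t`.
-/

lemma ite_le_sub_ite_le {x r r' : ℝ} (y : ℝ) (h : r ≤ r') :
    ((if x ≤ r' then y else 0) - if x ≤ r then y else 0) = if x ∈ Ioc r r' then y else 0 := by
  by_cases hr : x ≤ r
  · simp [hr, hr.trans h, not_lt.2 hr]
  · simp [hr, not_le.1 hr]

lemma sum_ite_mem_Ioc_of_monotone {s : ℕ → ℝ} (hs : Monotone s) (x y : ℝ) (m : ℕ) :
    ∑ j ∈ Finset.range m, (if x ∈ Ioc (s j) (s (j + 1)) then y else 0) =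
      if x ∈ Ioc (s 0) (s m) then y else 0 := by
  simp_rw [← ite_le_sub_ite_le y (hs (Nat.le_succ _)), ← ite_le_sub_ite_le y (hs (Nat.zero_le m))]
  exact Finset.sum_range_sub (fun j => if x ≤ s j then y else 0) m

lemma abs_sum_sub_sum_partition_le {ι : Type*} (S : Finset ι) (a v w : ι → ℝ) (hw : ∀ i, 0 ≤ w i)
    {s : ℕ → ℝ} (hs : Monotone s) (c : ℕ → ℝ) {m : ℕ} {ε : ℝ}
    (hclose : ∀ i ∈ S, ∀ j < m, a i ∈ Ioc (s j) (s (j + 1)) → |v i - c j| ≤ ε) :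
    |∑ i ∈ S, (if a i ∈ Ioc (s 0) (s m) then v i * w i else 0) -
        ∑ j ∈ Finset.range m, c j * ∑ i ∈ S, (if a i ∈ Ioc (s j) (s (j + 1)) then w i else 0)|
      ≤ ε * ∑ i ∈ S, if a i ∈ Ioc (s 0) (s m) then w i else 0 := by
  -- both sums become double sums over the pairs `(i, j)` with `a i` in the `j`-th interval
  simp_rw [← sum_ite_mem_Ioc_of_monotone hs, Finset.mul_sum, mul_ite, mul_zero]
  rw [Finset.sum_comm (s := Finset.range m), ← Finset.sum_sub_distrib]
  refine (Finset.abs_sum_le_sum_abs _ _).trans (Finset.sum_le_sum fun i hi => ?_)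
  rw [← Finset.sum_sub_distrib]
  refine (Finset.abs_sum_le_sum_abs _ _).trans (Finset.sum_le_sum fun j hj => ?_)
  split_ifs with hij
  · rw [← sub_mul, abs_mul, abs_of_nonneg (hw i)]
    exact mul_le_mul_of_nonneg_right (hclose i hi j (Finset.mem_range.1 hj) hij) (hw i)
  · simp

section gridSum

variable {τ : ℕ → ℝ} {f : ℝ → ℝ → ℝ}

lemma gridSum_eq_zero_of_lt (hτ : Monotone τ) {r : ℝ} (hr : r < τ 1) : gridSum τ f r = 0 := by
  refine (tsum_congr fun i => if_neg ?_).trans tsum_zero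
  exact not_le.2 (hr.trans_le (hτ (Nat.le_add_left 1 i)))

lemma gridSum_eq_sum_range (hτ : StrictMono τ) {r : ℝ} {K : ℕ} (hK : r < τ K) :
    gridSum τ f r = ∑ i ∈ Finset.range K, if τ (i + 1) ≤ r then f (τ i) (τ (i + 1)) else 0 := by
  refine tsum_eq_sum fun i hi => if_neg (not_le.2 (hK.trans_le ?_))
  exact hτ.monotone (by simp only [Finset.mem_range, not_lt] at hi; omega)

lemma gridSum_sub_gridSum (hτ : StrictMono τ) {r r' : ℝ} (h : r ≤ r') {K : ℕ} (hK : r' < τ K) :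
    gridSum τ f r' - gridSum τ f r =
      ∑ i ∈ Finset.range K, if τ (i + 1) ∈ Ioc r r' then f (τ i) (τ (i + 1)) else 0 := by
  rw [gridSum_eq_sum_range hτ hK, gridSum_eq_sum_range hτ (h.trans_lt hK), ← Finset.sum_sub_distrib]
  simp_rw [ite_le_sub_ite_le _ h]

lemma abs_gridSum_mul_sub_sum_le (hτ : StrictMono τ) (hτ_top : Tendsto τ atTop atTop)
    (hf : ∀ u v, 0 ≤ f u v) (φ : ℝ → ℝ) {s : ℕ → ℝ} (hs : Monotone s) {m : ℕ} (h0 : s 0 < τ 1)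
    {ε : ℝ} (hclose : ∀ i, ∀ j < m, τ (i + 1) ∈ Ioc (s j) (s (j + 1)) → |φ (τ i) - φ (s j)| ≤ ε) :
    |gridSum τ (fun u v => φ u * f u v) (s m) -
        ∑ j ∈ Finset.range m, φ (s j) * (gridSum τ f (s (j + 1)) - gridSum τ f (s j))|
      ≤ ε * gridSum τ f (s m) := by
  obtain ⟨K, hK⟩ := (hτ_top.eventually_gt_atTop (s m)).exists
  have hsK : ∀ j ≤ m, s j < τ K := fun j hj => (hs hj).trans_lt hK
  have hfrom_s0 : ∀ g : ℝ → ℝ → ℝ, gridSum τ g (s m) = gridSum τ g (s m) - gridSum τ g (s 0) := by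
    intro g; rw [gridSum_eq_zero_of_lt hτ.monotone h0, sub_zero]
  have hcoarse : ∑ j ∈ Finset.range m, φ (s j) * (gridSum τ f (s (j + 1)) - gridSum τ f (s j)) =
      ∑ j ∈ Finset.range m, φ (s j) * ∑ i ∈ Finset.range K,
        if τ (i + 1) ∈ Ioc (s j) (s (j + 1)) then f (τ i) (τ (i + 1)) else 0 :=
    Finset.sum_congr rfl fun j hj => by
      rw [gridSum_sub_gridSum hτ (hs (Nat.le_succ j)) (hsK _ (Finset.mem_range.1 hj))]
  rw [hfrom_s0, hfrom_s0 f, gridSum_sub_gridSum hτ (hs (Nat.zero_le m)) hK,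
    gridSum_sub_gridSum hτ (hs (Nat.zero_le m)) hK, hcoarse]
  exact abs_sum_sub_sum_partition_le _ (fun i => τ (i + 1)) (fun i => φ (τ i))
    (fun i => f (τ i) (τ (i + 1))) (fun i => hf _ _) hs _ fun i _ j hj => hclose i j hj

end gridSum

section Stieltjes

variable (F : StieltjesFunction ℝ) {φ : ℝ → ℝ} {ε : ℝ}

lemma abs_mul_sub_setIntegral_Ioc_le {a b c : ℝ} (hab : a ≤ b)
    (hφ : IntegrableOn φ (Ioc a b) F.measure) (hclose : ∀ x ∈ Ioc a b, |φ x - c| ≤ ε) :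
    |c * (F b - F a) - ∫ x in Ioc a b, φ x ∂F.measure| ≤ ε * (F b - F a) := by
  have hfin : F.measure (Ioc a b) < ⊤ := by rw [F.measure_Ioc]; exact ENNReal.ofReal_lt_top
  have hμ : F.measure.real (Ioc a b) = F b - F a := by
    rw [measureReal_def, F.measure_Ioc, ENNReal.toReal_ofReal (sub_nonneg.2 (F.mono hab))]
  calc |c * (F b - F a) - ∫ x in Ioc a b, φ x ∂F.measure|
      = ‖∫ x in Ioc a b, (φ x - c) ∂F.measure‖ := by
        rw [integral_sub hφ (integrableOn_const hfin.ne), setIntegral_const, hμ, smul_eq_mul,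
          Real.norm_eq_abs, abs_sub_comm, mul_comm]
    _ ≤ ε * F.measure.real (Ioc a b) := norm_setIntegral_le_of_norm_le_const hfin hclose
    _ = ε * (F b - F a) := by rw [hμ]

lemma abs_sum_mul_sub_setIntegral_le {s : ℕ → ℝ} (hs : Monotone s) {m : ℕ}
    (hφ : IntegrableOn φ (Ioc (s 0) (s m)) F.measure)
    (hclose : ∀ j < m, ∀ x ∈ Ioc (s j) (s (j + 1)), |φ x - φ (s j)| ≤ ε) :
    |∑ j ∈ Finset.range m, φ (s j) * (F (s (j + 1)) - F (s j)) -
        ∫ x in Ioc (s 0) (s m), φ x ∂F.measure| ≤ ε * (F (s m) - F (s 0)) := by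
  have hφ_piece : ∀ j < m, IntegrableOn φ (Ioc (s j) (s (j + 1))) F.measure :=
    fun j hj => hφ.mono_set (Ioc_subset_Ioc (hs (Nat.zero_le j)) (hs hj))
  have hsplit : ∫ x in Ioc (s 0) (s m), φ x ∂F.measure =
      ∑ j ∈ Finset.range m, ∫ x in Ioc (s j) (s (j + 1)), φ x ∂F.measure := by
    rw [← intervalIntegral.integral_of_le (hs (Nat.zero_le m)),
      ← intervalIntegral.sum_integral_adjacent_intervals fun j hj =>
        (intervalIntegrable_iff_integrableOn_Ioc_of_le (hs j.le_succ)).2 (hφ_piece j hj)]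
    exact Finset.sum_congr rfl fun j _ => intervalIntegral.integral_of_le (hs j.le_succ)
  rw [hsplit, ← Finset.sum_sub_distrib]
  calc _ ≤ ∑ j ∈ Finset.range m, ε * (F (s (j + 1)) - F (s j)) :=
        (Finset.abs_sum_le_sum_abs _ _).trans <| Finset.sum_le_sum fun j hj =>
          abs_mul_sub_setIntegral_Ioc_le F (hs j.le_succ) (hφ_piece j (Finset.mem_range.1 hj))
            (hclose j (Finset.mem_range.1 hj))
    _ = ε * (F (s m) - F (s 0)) := by rw [← Finset.mul_sum, Finset.sum_range_sub (fun j => F (s j))]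

end Stieltjes

lemma exists_monotone_partition_mesh_lt {t δ : ℝ} (ht : 0 ≤ t) (hδ : 0 < δ) :
    ∃ (m : ℕ) (s : ℕ → ℝ), Monotone s ∧ s 0 = 0 ∧ s m = t ∧ ∀ j, s (j + 1) - s j < δ := by
  obtain ⟨m, hm⟩ := exists_nat_gt (t / δ)
  have hm0 : (0 : ℝ) < m := (div_nonneg ht hδ.le).trans_lt hm
  refine ⟨m, fun j => j * (t / m), fun i j hij => by dsimp only; gcongr, by simp, by field_simp,
    fun j => ?_⟩
  rw [div_lt_iff₀ hδ] at hm
  simp only [Nat.cast_succ, add_mul, one_mul, add_sub_cancel_left]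
  rw [div_lt_iff₀ hm0]
  linarith

lemma tendsto_of_forall_approx {α : Type*} {l : Filter α} {a : α → ℝ} {L : ℝ}
    (h : ∀ ε > 0, ∃ (b : α → ℝ) (B : ℝ),
      Tendsto b l (𝓝 B) ∧ (∀ᶠ x in l, |a x - b x| ≤ ε) ∧ |B - L| ≤ ε) :
    Tendsto a l (𝓝 L) := by
  refine Metric.tendsto_nhds.2 fun e he => ?_
  obtain ⟨b, B, hb, hab, hBL⟩ := h (e / 3) (by positivity)
  filter_upwards [hab, Metric.tendsto_nhds.1 hb (e / 3) (by positivity)] with x hax hbx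
  rw [Real.dist_eq] at hbx ⊢
  linarith [abs_sub_le (a x) (b x) L, abs_sub_le (b x) B L]

section Partition

variable {φ : ℝ → ℝ} {t δ η : ℝ} {s : ℕ → ℝ} {m : ℕ}

lemma eventually_abs_gridSum_mul_sub_sum_le (G : GridSeq) {f : ℝ → ℝ → ℝ} (hf : ∀ u v, 0 ≤ f u v)
    (hδ : 0 < δ) (hφ : ∀ x ∈ Icc 0 t, ∀ y ∈ Icc 0 t, dist x y ≤ δ → dist (φ x) (φ y) ≤ η)
    (hs : Monotone s) (hs0 : s 0 = 0) (hsm : s m = t) (hs_mesh : ∀ j, s (j + 1) - s j ≤ δ / 2) :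
    ∀ᶠ N in atTop, |gridSum (G.T N) (fun u v => φ u * f u v) t -
        ∑ j ∈ Finset.range m, φ (s j) * (gridSum (G.T N) f (s (j + 1)) - gridSum (G.T N) f (s j))|
      ≤ η * gridSum (G.T N) f t := by
  obtain ⟨N₀, hN₀⟩ := G.mesh (δ / 2) (by positivity)
  filter_upwards [eventually_ge_atTop N₀] with N hN
  have hclose : ∀ i, ∀ j < m, G.T N (i + 1) ∈ Ioc (s j) (s (j + 1)) →
      |φ (G.T N i) - φ (s j)| ≤ η := by
    intro i j hj hi
    have hτ_step := hN₀ N hN i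
    have hτ_lt := G.mono N (Nat.lt_succ_self i)
    have hτ_nonneg : 0 ≤ G.T N i := G.zero N ▸ (G.mono N).monotone (Nat.zero_le i)
    have hsj := hs (Nat.zero_le j)
    have hsj' := hs hj
    refine hφ _ ⟨hτ_nonneg, ?_⟩ _ ⟨?_, ?_⟩ (abs_le.2 ⟨?_, ?_⟩) <;>
      linarith [hi.1, hi.2, hs_mesh j, hs (Nat.le_succ j)]
  have hτ_pos : s 0 < G.T N 1 := hs0 ▸ G.zero N ▸ G.mono N zero_lt_one
  simpa only [hsm] using abs_gridSum_mul_sub_sum_le (G.mono N) (G.unbounded N) hf φ hs hτ_pos hclose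

lemma abs_sum_mul_sub_setIntegral_Ioc_zero_le (F : StieltjesFunction ℝ)
    (hφ_cont : ContinuousOn φ (Icc 0 t))
    (hφ : ∀ x ∈ Icc 0 t, ∀ y ∈ Icc 0 t, dist x y ≤ δ → dist (φ x) (φ y) ≤ η)
    (hs : Monotone s) (hs0 : s 0 = 0) (hsm : s m = t) (hs_mesh : ∀ j, s (j + 1) - s j ≤ δ / 2) :
    |∑ j ∈ Finset.range m, φ (s j) * (F (s (j + 1)) - F (s j)) -
        ∫ x in Ioc 0 t, φ x ∂F.measure| ≤ η * (F t - F 0) := by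
  have hδ : 0 ≤ δ := by linarith [hs_mesh 0, hs (Nat.le_succ 0)]
  have hclose : ∀ j < m, ∀ x ∈ Ioc (s j) (s (j + 1)), |φ x - φ (s j)| ≤ η := by
    intro j hj x hx
    have hsj := hs (Nat.zero_le j)
    have hsj' := hs hj
    refine hφ _ ⟨?_, ?_⟩ _ ⟨?_, ?_⟩ (abs_le.2 ⟨?_, ?_⟩) <;> linarith [hx.1, hx.2, hs_mesh j]
  have hφ_int : IntegrableOn φ (Ioc (s 0) (s m)) F.measure := by
    rw [hs0, hsm]
    exact hφ_cont.integrableOn_Icc.mono_set Ioc_subset_Icc_self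
  simpa only [hs0, hsm] using abs_sum_mul_sub_setIntegral_le F hs hφ_int hclose

end Partition

theorem stmt4_general (G : GridSeq) (X Q φ : ℝ → ℝ)
    (hQ : HasQV G X Q)
    (hQc : Continuous Q) (hmono : Monotone Q)
    (hφ : ContinuousOn φ (Set.Ici 0)) :
    ∀ t > 0,
      Filter.Tendsto
        (fun N => gridSum (G.T N) (fun u v => φ u * (X v - X u) ^ 2) t)
        Filter.atTop
        (nhds (∫ s in Set.Ioc (0 : ℝ) t, φ s
          ∂(StieltjesFunction.mk Q hmono
              (fun _ => hQc.continuousWithinAt)).measure)) := by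
  intro t ht
  obtain ⟨-, hQ0, hQV⟩ := hQ
  have hQt : 0 ≤ Q t := hQ0 ▸ hmono ht.le
  have hφt : ContinuousOn φ (Icc 0 t) := hφ.mono Icc_subset_Ici_self
  refine tendsto_of_forall_approx fun ε hε => ?_
  set η := ε / (Q t + 1)
  have hη : η * (Q t + 1) = ε := div_mul_cancel₀ ε (by positivity)
  obtain ⟨δ, hδ, hφδ⟩ := Metric.uniformContinuousOn_iff_le.1
    (isCompact_Icc.uniformContinuousOn_of_continuous hφt) η (by positivity)
  obtain ⟨m, s, hs, hs0, hsm, hs_mesh⟩ := exists_monotone_partition_mesh_lt ht.le (half_pos hδ)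
  refine ⟨fun N => ∑ j ∈ Finset.range m, φ (s j) * (gridSum (G.T N) (fun u v => (X v - X u) ^ 2)
    (s (j + 1)) - gridSum (G.T N) (fun u v => (X v - X u) ^ 2) (s j)),
    ∑ j ∈ Finset.range m, φ (s j) * (Q (s (j + 1)) - Q (s j)),
    tendsto_finsetSum _ fun j _ => ((hQV _).sub (hQV _)).const_mul _, ?_, ?_⟩
  · filter_upwards [eventually_abs_gridSum_mul_sub_sum_le G (fun u v => sq_nonneg (X v - X u))
      hδ hφδ hs hs0 hsm fun j => (hs_mesh j).le,
      (hQV t).eventually (gt_mem_nhds (lt_add_one (Q t)))] with N hN hQVN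
    exact hN.trans (by rw [← hη]; gcongr)
  · have key := abs_sum_mul_sub_setIntegral_Ioc_zero_le (StieltjesFunction.mk Q hmono
      (fun _ => hQc.continuousWithinAt)) hφt hφδ hs hs0 hsm fun j => (hs_mesh j).le
    refine key.trans ?_
    change η * (Q t - Q 0) ≤ ε
    rw [hQ0, ← hη]
    gcongr
    linarith

/-- weighted quadratic variation sums converge to the
Lebesgue–Stieltjes integral `∫_0^t φ(s) d[X]_s`. -/
theorem stmt4 (G : GridSeq) (X Q φ : ℝ → ℝ)
    (hX : ContinuousOn X (Set.Ici 0)) (hQ : HasQV G X Q)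
    (hQc : Continuous Q) (hmono : Monotone Q)
    (hφ : ContinuousOn φ (Set.Ici 0)) :
    ∀ t > 0,
      Filter.Tendsto
        (fun N => gridSum (G.T N) (fun u v => φ u * (X v - X u) ^ 2) t)
        Filter.atTop
        (nhds (∫ s in Set.Ioc (0 : ℝ) t, φ s
          ∂(StieltjesFunction.mk Q hmono
              (fun _ => hQc.continuousWithinAt)).measure)) :=
  stmt4_general G X Q φ hQ hQc hmono hφ
end

section
/- Let X be continuous with continuous quadratic variation [X] along grids (T_N), with X_0 = 0 and [X]_t = 0 for all t (vanishing quadratic variation). Then the nonanticipative Riemann sums ∑_{t_i, t_{i+1} ∈ T_N, t_{i+1} ≤ t} 2 X_{t_i}(X_{t_{i+1}} − X_{t_i}) converge to X_t² as N → ∞. In particular, if X is not identically zero on [0,t], the pathwise integral ∫_0^t 2X_s dX_s = X_t² is strictly positive for some t, exhibiting a pathwise arbitrage for such price trajectories. -/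
open Filter Topology Set MeasureTheory

lemma exists_last (τ : ℕ → ℝ) (hub : Filter.Tendsto τ Filter.atTop Filter.atTop)
    {t : ℝ} (h0 : ¬ t < τ 0) : ∃ m, τ m ≤ t ∧ t < τ (m + 1) := by
  classical
  obtain ⟨k, hk⟩ := (hub.eventually_gt_atTop t).exists
  have hex : ∃ n, t < τ n := ⟨k, hk⟩
  have hn0 : Nat.find hex ≠ 0 := by
    intro h
    exact h0 (h ▸ Nat.find_spec hex)
  refine ⟨Nat.find hex - 1, ?_, ?_⟩
  · have := Nat.find_min hex (m := Nat.find hex - 1) (by omega)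
    exact not_lt.mp this
  · have h1 : Nat.find hex - 1 + 1 = Nat.find hex := by omega
    rw [h1]; exact Nat.find_spec hex

lemma gridSum_eq (τ : ℕ → ℝ) (hmono : StrictMono τ) (f : ℝ → ℝ → ℝ) {t : ℝ} {m : ℕ}
    (h1 : τ m ≤ t) (h2 : t < τ (m + 1)) :
    gridSum τ f t = ∑ i ∈ Finset.range m, f (τ i) (τ (i + 1)) := by
  rw [gridSum, tsum_eq_sum (s := Finset.range m)]
  · refine Finset.sum_congr rfl (fun i hi => ?_)
    rw [if_pos]
    exact le_trans (hmono.monotone (Nat.succ_le_of_lt (Finset.mem_range.mp hi))) h1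
  · intro i hi
    rw [if_neg]
    have hmi : m + 1 ≤ i + 1 := by simp at hi; omega
    exact not_le.mpr (lt_of_lt_of_le h2 (hmono.monotone hmi))

/-- for a path with vanishing quadratic variation and `X_0 = 0`,
the nonanticipative Riemann sums of `2X dX` converge to `X_t²`; in particular
a pathwise arbitrage exists whenever `X` is not identically zero on `[0,t]`. -/
theorem stmt5 (G : GridSeq) (X : ℝ → ℝ)
    (hX : ContinuousOn X (Set.Ici 0)) (hX0 : X 0 = 0)
    (hQV : HasQV G X (fun _ => 0)) :
    ∀ t > 0,
      ConvTo G (fun u v => 2 * X u * (X v - X u)) t ((X t) ^ 2) ∧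
      ((∃ s ∈ Set.Icc (0 : ℝ) t, X s ≠ 0) →
        ∃ s ∈ Set.Ioc (0 : ℝ) t, 0 < (X s) ^ 2) := by
  intro t ht
  constructor
  · classical
    have h0 : ∀ N, ¬ t < G.T N 0 := fun N => by rw [G.zero N]; linarith
    have hex : ∀ N, ∃ m, G.T N m ≤ t ∧ t < G.T N (m + 1) :=
      fun N => exists_last _ (G.unbounded N) (h0 N)
    choose m hm1 hm2 using hex
    have key : ∀ N, gridSum (G.T N) (fun u v => 2 * X u * (X v - X u)) t
        = X (G.T N (m N)) ^ 2 - gridSum (G.T N) (fun u v => (X v - X u) ^ 2) t := by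
      intro N
      rw [gridSum_eq _ (G.mono N) _ (hm1 N) (hm2 N),
          gridSum_eq _ (G.mono N) _ (hm1 N) (hm2 N)]
      have tel : ∑ i ∈ Finset.range (m N), (X (G.T N (i + 1)) ^ 2 - X (G.T N i) ^ 2)
          = X (G.T N (m N)) ^ 2 - X (G.T N 0) ^ 2 :=
        Finset.sum_range_sub (fun i => X (G.T N i) ^ 2) (m N)
      rw [G.zero N, hX0] at tel
      have hterm : ∀ i ∈ Finset.range (m N),
          2 * X (G.T N i) * (X (G.T N (i + 1)) - X (G.T N i))
          = (X (G.T N (i + 1)) ^ 2 - X (G.T N i) ^ 2)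
            - (X (G.T N (i + 1)) - X (G.T N i)) ^ 2 := by
        intro i _; ring
      rw [Finset.sum_congr rfl hterm, Finset.sum_sub_distrib, tel]
      ring
    have hτ : Filter.Tendsto (fun N => G.T N (m N)) Filter.atTop (nhds t) := by
      rw [Metric.tendsto_atTop]
      intro ε hε
      obtain ⟨N₀, hN₀⟩ := G.mesh (ε / 2) (by linarith)
      refine ⟨N₀, fun N hN => ?_⟩
      have h := hN₀ N hN (m N)
      have h1 := hm1 N; have h2 := hm2 N
      rw [Real.dist_eq, abs_sub_lt_iff]
      constructor <;> linarith
    have hmem : ∀ N, G.T N (m N) ∈ Set.Ici (0 : ℝ) := fun N => by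
      have := (G.mono N).monotone (Nat.zero_le (m N))
      rw [G.zero N] at this; exact this
    have hXc : Filter.Tendsto (fun N => X (G.T N (m N))) Filter.atTop (nhds (X t)) := by
      have hc : ContinuousWithinAt X (Set.Ici 0) t := hX t (le_of_lt ht)
      exact hc.tendsto.comp
        (tendsto_nhdsWithin_iff.mpr ⟨hτ, Filter.Eventually.of_forall hmem⟩)
    have hQ : Filter.Tendsto (fun N => gridSum (G.T N) (fun u v => (X v - X u) ^ 2) t)
        Filter.atTop (nhds 0) := hQV.2.2 t
    have hfin := (hXc.pow 2).sub hQ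
    simp only [sub_zero] at hfin
    unfold ConvTo
    simp only [key]
    exact hfin
  · rintro ⟨s, hs, hXs⟩
    have hs0 : s ≠ 0 := fun h => hXs (h ▸ hX0)
    exact ⟨s, ⟨lt_of_le_of_ne hs.1 (Ne.symm hs0), hs.2⟩, by positivity⟩
end

section
/- (Pathwise Itô exponential) Let Y : [0,∞) → ℝ be continuous with Y_0 = 0 and continuous quadratic variation [Y] along grids (T_N), and set L_t := (1/2)[Y]_t and X_t := exp(Y_t − L_t). Then X satisfies the pathwise integral equation X_t = 1 + ∫_0^t X_s dY_s for all t ≥ 0, where ∫_0^t X_s dY_s = lim_N ∑_{t_i, t_{i+1} ∈ T_N, t_{i+1} ≤ t} X_{t_i}(Y_{t_{i+1}} − Y_{t_i}). -/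
/-!
Write `X = exp (Y - Q/2)`. On a grid interval with increments `y` of `Y` and `q` of `Q`, a
third-order Taylor expansion of `exp` gives
`X_u * y = ΔX - X_u * (y² - q) / 2 + X_u * itoRemainder y q`, where the remainder is at most
`3 ε (y² + q)` once `|y|, q ≤ ε ≤ 1/2`. Summing over the grid, `ΔX` telescopes to `X_t - 1`;
the remainder sums vanish because the increments become uniformly small while `∑ (y² + q)`
stays bounded; and `∑ X_u (y² - q) → 0` (Föllmer's lemma) by freezing `X` on a coarse
partition of `[0, t]`, on each block of which `∑ (y² - q) → 0` by the definition of the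
quadratic variation.
-/

open Filter Topology Set MeasureTheory

open Finset Real

lemma tendsto_zero_of_eventually_abs_le_mul {α : Type*} {l : Filter α} {f : α → ℝ} {C : ℝ}
    (h : ∀ᶠ ε in 𝓝[>] 0, ∀ᶠ x in l, |f x| ≤ C * ε) : Tendsto f l (𝓝 0) := by
  rw [Metric.tendsto_nhds]
  intro δ hδ
  have hsmall : ∀ᶠ ε in 𝓝[>] (0 : ℝ), C * ε < δ :=
    (((continuous_const.mul continuous_id).tendsto' 0 0 (by simp)).mono_left
      nhdsWithin_le_nhds).eventually (gt_mem_nhds hδ)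
  obtain ⟨ε, hε, hCε⟩ := (h.and hsmall).exists
  filter_upwards [hε] with x hx
  rw [Real.dist_0_eq_abs]
  linarith

lemma abs_sum_mul_sub_sum_mul_sum_Ico_le {w c b : ℕ → ℝ} {k : ℕ → ℕ} (hk : Monotone k)
    (hk0 : k 0 = 0) {ε : ℝ} (m : ℕ)
    (hwc : ∀ j < m, ∀ i ∈ Finset.Ico (k j) (k (j + 1)), |w i - c j| ≤ ε) :
    |∑ i ∈ range (k m), w i * b i - ∑ j ∈ range m, c j * ∑ i ∈ Ico (k j) (k (j + 1)), b i|
      ≤ ε * ∑ i ∈ range (k m), |b i| := by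
  induction m with
  | zero => simp [hk0]
  | succ m ih =>
    have hblock : |∑ i ∈ Ico (k m) (k (m + 1)), w i * b i
        - c m * ∑ i ∈ Ico (k m) (k (m + 1)), b i| ≤ ε * ∑ i ∈ Ico (k m) (k (m + 1)), |b i| := by
      rw [mul_sum, ← sum_sub_distrib, mul_sum]
      refine (abs_sum_le_sum_abs _ _).trans (sum_le_sum fun i hi => ?_)
      rw [← sub_mul, abs_mul]
      exact mul_le_mul_of_nonneg_right (hwc m m.lt_succ_self i hi) (abs_nonneg _)
    have hprev := ih fun j hj => hwc j (hj.trans m.lt_succ_self)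
    rw [← sum_range_add_sum_Ico _ (hk m.le_succ), ← sum_range_add_sum_Ico _ (hk m.le_succ),
      sum_range_succ]
    calc _ = |(∑ i ∈ range (k m), w i * b i
            - ∑ j ∈ range m, c j * ∑ i ∈ Ico (k j) (k (j + 1)), b i)
          + (∑ i ∈ Ico (k m) (k (m + 1)), w i * b i
            - c m * ∑ i ∈ Ico (k m) (k (m + 1)), b i)| := by
            congr 1; ring
      _ ≤ _ := (abs_add_le _ _).trans (add_le_add hprev hblock)
      _ = _ := by ring

lemma exists_partition_of_step_le {t δ : ℝ} (ht : 0 ≤ t) (hδ : 0 < δ) :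
    ∃ (m : ℕ) (s : ℕ → ℝ), Monotone s ∧ s 0 = 0 ∧ s m = t ∧ ∀ j, s (j + 1) - s j ≤ δ := by
  obtain ⟨m, hm⟩ := exists_nat_gt (t / δ)
  have hm0 : (0 : ℝ) < m := (div_nonneg ht hδ.le).trans_lt hm
  refine ⟨m, fun j => j * (t / m), fun i j hij => by dsimp only; gcongr, by simp,
    mul_div_cancel₀ t hm0.ne', fun j => ?_⟩
  rw [div_lt_iff₀ hδ] at hm
  simpa [add_mul, div_le_iff₀ hm0] using by linarith

lemma abs_exp_sub_taylor_le {x : ℝ} (hx : |x| ≤ 1) : |exp x - 1 - x - x ^ 2 / 2| ≤ |x| ^ 3 := by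
  have h := Real.exp_bound hx (n := 3) (by norm_num)
  norm_num [Finset.sum_range_succ, Nat.factorial] at h
  calc |exp x - 1 - x - x ^ 2 / 2| = |exp x - (1 + x + x ^ 2 / 2)| := by ring_nf
    _ ≤ |x| ^ 3 * (2 / 9) := h
    _ ≤ |x| ^ 3 := by nlinarith [pow_nonneg (abs_nonneg x) 3]

noncomputable def itoRemainder (y q : ℝ) : ℝ :=
  y * q / 2 - q ^ 2 / 8 - (exp (y - q / 2) - 1 - (y - q / 2) - (y - q / 2) ^ 2 / 2)

lemma exp_mul_sub_eq (yu yv qu qv : ℝ) :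
    exp (yu - qu / 2) * (yv - yu) = (exp (yv - qv / 2) - exp (yu - qu / 2))
      - exp (yu - qu / 2) * ((yv - yu) ^ 2 - (qv - qu)) / 2
      + exp (yu - qu / 2) * itoRemainder (yv - yu) (qv - qu) := by
  have : exp (yv - qv / 2) = exp (yu - qu / 2) * exp ((yv - yu) - (qv - qu) / 2) := by
    rw [← exp_add]; ring_nf
  rw [this, itoRemainder]
  ring

lemma abs_itoRemainder_le {y q ε : ℝ} (hy : |y| ≤ ε) (hq0 : 0 ≤ q) (hq : q ≤ ε)
    (hε : ε ≤ 1 / 2) : |itoRemainder y q| ≤ 3 * ε * (y ^ 2 + q) := by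
  obtain ⟨hy1, hy2⟩ := abs_le.mp hy
  have hx : |y - q / 2| ≤ 3 * ε / 2 := abs_le.mpr ⟨by linarith, by linarith⟩
  have hcube : |y - q / 2| ^ 3 ≤ 3 * ε / 2 * (y - q / 2) ^ 2 := by
    rw [pow_succ', ← sq_abs (y - q / 2)]
    exact mul_le_mul_of_nonneg_right hx (sq_nonneg _)
  have hr := abs_le.mp (abs_exp_sub_taylor_le (hx.trans (by linarith)))
  rw [itoRemainder, abs_le]
  constructor <;> nlinarith [sq_nonneg (y + q / 2), mul_nonneg hq0 (hq0.trans hq)]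

namespace GridSeq

variable (G : GridSeq)

lemma exists_lt_T_succ (N : ℕ) (t : ℝ) : ∃ i, t < G.T N (i + 1) :=
  (((G.unbounded N).comp (tendsto_add_atTop_nat 1)).eventually_gt_atTop t).exists

noncomputable def lastIndex (N : ℕ) (t : ℝ) : ℕ := Nat.find (G.exists_lt_T_succ N t)

def incr (f : ℝ → ℝ) (N i : ℕ) : ℝ := f (G.T N (i + 1)) - f (G.T N i)

variable {G}

lemma lt_lastIndex_iff {N i : ℕ} {t : ℝ} : i < G.lastIndex N t ↔ G.T N (i + 1) ≤ t := by
  rw [lastIndex, Nat.lt_find_iff]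
  refine ⟨fun h => not_lt.mp (h i le_rfl), fun h n hn => not_lt.mpr ?_⟩
  exact ((G.mono N).monotone (Nat.succ_le_succ hn)).trans h

lemma lastIndex_mono (N : ℕ) : Monotone (G.lastIndex N) := fun _ _ hst =>
  Nat.find_mono fun _ hi => hst.trans_lt hi

lemma lastIndex_zero (N : ℕ) : G.lastIndex N 0 = 0 :=
  (Nat.find_eq_zero _).mpr (G.zero N ▸ G.mono N zero_lt_one)

lemma T_nonneg (N i : ℕ) : 0 ≤ G.T N i :=
  G.zero N ▸ (G.mono N).monotone (Nat.zero_le i)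

lemma T_lastIndex_le {N : ℕ} {t : ℝ} (ht : 0 ≤ t) : G.T N (G.lastIndex N t) ≤ t := by
  cases h : G.lastIndex N t with
  | zero => rwa [G.zero]
  | succ k => exact lt_lastIndex_iff.mp (h ▸ k.lt_succ_self)

lemma lt_T_lastIndex_succ (N : ℕ) (t : ℝ) : t < G.T N (G.lastIndex N t + 1) :=
  Nat.find_spec (G.exists_lt_T_succ N t)

lemma T_mem_Icc_of_lt_lastIndex {N i : ℕ} {t : ℝ} (hi : i < G.lastIndex N t) :
    G.T N i ∈ Icc 0 t :=
  ⟨G.T_nonneg N i, ((G.mono N) i.lt_succ_self).le.trans (lt_lastIndex_iff.mp hi)⟩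

lemma T_succ_mem_Ioc_of_mem_Ico {N i : ℕ} {s s' : ℝ}
    (hi : i ∈ Finset.Ico (G.lastIndex N s) (G.lastIndex N s')) : G.T N (i + 1) ∈ Ioc s s' :=
  ⟨not_le.mp fun h => (Finset.mem_Ico.mp hi).1.not_gt (lt_lastIndex_iff.mpr h),
    lt_lastIndex_iff.mp (Finset.mem_Ico.mp hi).2⟩

lemma abs_T_sub_le_of_mem_Ico {N i : ℕ} {s s' δ : ℝ}
    (hmesh : ∀ i, G.T N (i + 1) - G.T N i ≤ δ) (hss' : s' - s ≤ δ)
    (hi : i ∈ Finset.Ico (G.lastIndex N s) (G.lastIndex N s')) : |G.T N i - s| ≤ δ := by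
  have hτ := T_succ_mem_Ioc_of_mem_Ico hi
  have hlt : G.T N i < G.T N (i + 1) := G.mono N i.lt_succ_self
  rw [abs_le]
  constructor <;> linarith [hmesh i, hτ.1, hτ.2]

lemma gridSum_eq_sum (N : ℕ) (f : ℝ → ℝ → ℝ) (t : ℝ) :
    gridSum (G.T N) f t = ∑ i ∈ range (G.lastIndex N t), f (G.T N i) (G.T N (i + 1)) := by
  rw [gridSum, tsum_eq_sum fun i hi =>
    if_neg fun h => hi (mem_range.mpr (lt_lastIndex_iff.mpr h))]
  exact sum_congr rfl fun i hi => if_pos (lt_lastIndex_iff.mp (mem_range.mp hi))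

lemma sum_incr (f : ℝ → ℝ) (N n : ℕ) : ∑ i ∈ range n, G.incr f N i = f (G.T N n) - f 0 := by
  simpa [incr, G.zero] using sum_range_sub (fun i => f (G.T N i)) n

lemma eventually_mesh_le {δ : ℝ} (hδ : 0 < δ) :
    ∀ᶠ N in atTop, ∀ i, G.T N (i + 1) - G.T N i ≤ δ :=
  eventually_atTop.mpr (G.mesh δ hδ)

lemma tendsto_T_lastIndex {t : ℝ} (ht : 0 ≤ t) :
    Tendsto (fun N => G.T N (G.lastIndex N t)) atTop (𝓝[Ici 0] t) := by
  refine tendsto_nhdsWithin_of_tendsto_nhds_of_eventually_within _ ?_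
    (Eventually.of_forall fun N => G.T_nonneg N _)
  refine tendsto_order.2 ⟨fun a ha => ?_, fun a ha =>
    Eventually.of_forall fun N => (T_lastIndex_le ht).trans_lt ha⟩
  filter_upwards [G.eventually_mesh_le (sub_pos.mpr ha)] with N hN
  linarith [hN (G.lastIndex N t), G.lt_T_lastIndex_succ N t]

lemma tendsto_comp_T_lastIndex {f : ℝ → ℝ} {t : ℝ} (hf : ContinuousWithinAt f (Ici 0) t)
    (ht : 0 ≤ t) : Tendsto (fun N => f (G.T N (G.lastIndex N t))) atTop (𝓝 (f t)) :=
  hf.tendsto.comp (G.tendsto_T_lastIndex ht)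

lemma eventually_abs_incr_le {f : ℝ → ℝ} {t ε : ℝ} (hf : ContinuousOn f (Icc 0 t))
    (hε : 0 < ε) : ∀ᶠ N in atTop, ∀ i < G.lastIndex N t, |G.incr f N i| ≤ ε := by
  obtain ⟨δ, hδ, hfδ⟩ := Metric.uniformContinuousOn_iff_le.mp
    (isCompact_Icc.uniformContinuousOn_of_continuous hf) ε hε
  filter_upwards [G.eventually_mesh_le hδ] with N hN i hi
  have hlt : G.T N i < G.T N (i + 1) := G.mono N i.lt_succ_self
  refine hfδ _ ⟨G.T_nonneg N _, lt_lastIndex_iff.mp hi⟩ _ (T_mem_Icc_of_lt_lastIndex hi) ?_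
  rw [Real.dist_eq, abs_of_pos (sub_pos.mpr hlt)]
  exact hN i

end GridSeq

open GridSeq

namespace HasQV

variable {G : GridSeq} {Y Q : ℝ → ℝ} (hQ : HasQV G Y Q)
include hQ

lemma tendsto_sum_sq (t : ℝ) :
    Tendsto (fun N => ∑ i ∈ range (G.lastIndex N t), G.incr Y N i ^ 2) atTop (𝓝 (Q t)) :=
  (hQ.2.2 t).congr fun N => G.gridSum_eq_sum N _ t

lemma monotone : Monotone Q := fun s t hst =>
  le_of_tendsto_of_tendsto' (hQ.tendsto_sum_sq s) (hQ.tendsto_sum_sq t) fun N =>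
    sum_le_sum_of_subset_of_nonneg (range_subset_range.mpr (lastIndex_mono N hst))
      fun _ _ _ => sq_nonneg _

lemma incr_nonneg (N i : ℕ) : 0 ≤ G.incr Q N i :=
  sub_nonneg.mpr (hQ.monotone ((G.mono N).monotone i.le_succ))

lemma eventually_sum_sq_add_incr_le {t : ℝ} (ht : 0 ≤ t) :
    ∀ᶠ N in atTop, ∑ i ∈ range (G.lastIndex N t), (G.incr Y N i ^ 2 + G.incr Q N i)
      ≤ 2 * Q t + 1 := by
  filter_upwards [(hQ.tendsto_sum_sq t).eventually_le_const (lt_add_one (Q t))] with N hN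
  have hQsum : ∑ i ∈ range (G.lastIndex N t), G.incr Q N i ≤ Q t := by
    rw [sum_incr, hQ.2.1, sub_zero]
    exact hQ.monotone (T_lastIndex_le ht)
  rw [sum_add_distrib]
  linarith

lemma eventually_sum_abs_sq_sub_incr_le {t : ℝ} (ht : 0 ≤ t) :
    ∀ᶠ N in atTop, ∑ i ∈ range (G.lastIndex N t), |G.incr Y N i ^ 2 - G.incr Q N i|
      ≤ 2 * Q t + 1 := by
  filter_upwards [hQ.eventually_sum_sq_add_incr_le ht] with N hN
  refine le_trans (sum_le_sum fun i _ => (abs_sub _ _).trans_eq ?_) hN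
  rw [abs_of_nonneg (sq_nonneg _), abs_of_nonneg (hQ.incr_nonneg N i)]

lemma tendsto_sum_sq_sub_incr {t : ℝ} (ht : 0 ≤ t) :
    Tendsto (fun N => ∑ i ∈ range (G.lastIndex N t), (G.incr Y N i ^ 2 - G.incr Q N i))
      atTop (𝓝 0) := by
  have hQt : Tendsto (fun N => ∑ i ∈ range (G.lastIndex N t), G.incr Q N i) atTop (𝓝 (Q t)) := by
    simpa only [sum_incr, hQ.2.1, sub_zero] using G.tendsto_comp_T_lastIndex (hQ.1 t ht) ht
  simpa only [sum_sub_distrib, sub_self] using (hQ.tendsto_sum_sq t).sub hQt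

theorem tendsto_sum_mul_sq_sub_incr {f : ℝ → ℝ} {t : ℝ} (hf : ContinuousOn f (Icc 0 t))
    (ht : 0 ≤ t) :
    Tendsto (fun N => ∑ i ∈ range (G.lastIndex N t),
      f (G.T N i) * (G.incr Y N i ^ 2 - G.incr Q N i)) atTop (𝓝 0) := by
  refine tendsto_zero_of_eventually_abs_le_mul (C := 2 * Q t + 2)
    (eventually_nhdsWithin_of_forall fun ε (hε : 0 < ε) => ?_)
  obtain ⟨δ, hδ, hfδ⟩ := Metric.uniformContinuousOn_iff_le.mp
    (isCompact_Icc.uniformContinuousOn_of_continuous hf) ε hε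
  obtain ⟨m, s, hs_mono, hs0, hsm, hs_step⟩ := exists_partition_of_step_le ht hδ
  have hs_mem {j : ℕ} (hj : j ≤ m) : s j ∈ Icc 0 t := ⟨hs0 ▸ hs_mono j.zero_le, hsm ▸ hs_mono hj⟩
  set D : ℕ → ℝ → ℝ := fun N u =>
    ∑ i ∈ range (G.lastIndex N u), (G.incr Y N i ^ 2 - G.incr Q N i)
  have hV : Tendsto (fun N => ∑ j ∈ range m, f (s j) * (D N (s (j + 1)) - D N (s j)))
      atTop (𝓝 0) := by
    simpa only [sub_self, mul_zero, sum_const_zero] using tendsto_finsetSum (range m) fun j hj =>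
      ((hQ.tendsto_sum_sq_sub_incr (hs_mem (mem_range.mp hj)).1).sub
        (hQ.tendsto_sum_sq_sub_incr (hs_mem (mem_range.mp hj).le).1)).const_mul (f (s j))
  filter_upwards [Metric.tendsto_nhds.mp hV ε hε, G.eventually_mesh_le hδ,
    hQ.eventually_sum_abs_sq_sub_incr_le ht] with N hVN hmesh habs
  rw [Real.dist_0_eq_abs] at hVN
  have hblocks := abs_sum_mul_sub_sum_mul_sum_Ico_le (w := fun i => f (G.T N i))
    (c := fun j => f (s j)) (b := fun i => G.incr Y N i ^ 2 - G.incr Q N i)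
    (k := fun j => G.lastIndex N (s j)) ((lastIndex_mono N).comp hs_mono)
    (by simp [hs0, lastIndex_zero]) m fun j hj i hi => by
      refine hfδ _ (T_mem_Icc_of_lt_lastIndex ((Finset.mem_Ico.mp hi).2.trans_le
        (lastIndex_mono N (hs_mem hj).2))) _ (hs_mem hj.le) ?_
      rw [Real.dist_eq]
      exact abs_T_sub_le_of_mem_Ico hmesh (hs_step j) hi
  have hblock_sums : ∑ j ∈ range m, f (s j) * ∑ i ∈ Finset.Ico (G.lastIndex N (s j))
      (G.lastIndex N (s (j + 1))), (G.incr Y N i ^ 2 - G.incr Q N i)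
      = ∑ j ∈ range m, f (s j) * (D N (s (j + 1)) - D N (s j)) :=
    sum_congr rfl fun j _ => by rw [sum_Ico_eq_sub _ (lastIndex_mono N (hs_mono j.le_succ))]
  rw [hblock_sums, hsm] at hblocks
  have := abs_sub_abs_le_abs_sub
    (∑ i ∈ range (G.lastIndex N t), f (G.T N i) * (G.incr Y N i ^ 2 - G.incr Q N i))
    (∑ j ∈ range m, f (s j) * (D N (s (j + 1)) - D N (s j)))
  nlinarith

theorem tendsto_sum_mul_itoRemainder {g : ℝ → ℝ} {t : ℝ} (hg : ContinuousOn g (Icc 0 t))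
    (hY : ContinuousOn Y (Icc 0 t)) (ht : 0 ≤ t) :
    Tendsto (fun N => ∑ i ∈ range (G.lastIndex N t),
      g (G.T N i) * itoRemainder (G.incr Y N i) (G.incr Q N i)) atTop (𝓝 0) := by
  obtain ⟨M, hM⟩ := isCompact_Icc.exists_bound_of_continuousOn hg
  have hM0 : 0 ≤ M := (norm_nonneg _).trans (hM 0 ⟨le_rfl, ht⟩)
  refine tendsto_zero_of_eventually_abs_le_mul (C := 3 * M * (2 * Q t + 1)) ?_
  filter_upwards [Ioo_mem_nhdsGT (by norm_num : (0 : ℝ) < 1 / 2)] with ε ⟨hε, hε2⟩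
  filter_upwards [G.eventually_abs_incr_le hY hε,
    G.eventually_abs_incr_le (hQ.1.mono Icc_subset_Ici_self) hε,
    hQ.eventually_sum_sq_add_incr_le ht] with N hYN hQN hsum
  calc _ ≤ ∑ i ∈ range (G.lastIndex N t),
        |g (G.T N i) * itoRemainder (G.incr Y N i) (G.incr Q N i)| := abs_sum_le_sum_abs _ _
    _ ≤ ∑ i ∈ range (G.lastIndex N t), M * (3 * ε * (G.incr Y N i ^ 2 + G.incr Q N i)) := by
      refine sum_le_sum fun i hi => ?_
      have hi := mem_range.mp hi
      rw [abs_mul]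
      exact mul_le_mul (hM _ (T_mem_Icc_of_lt_lastIndex hi))
        (abs_itoRemainder_le (hYN i hi) (hQ.incr_nonneg N i)
          ((le_abs_self _).trans (hQN i hi)) hε2.le) (abs_nonneg _) hM0
    _ = 3 * M * ε * ∑ i ∈ range (G.lastIndex N t), (G.incr Y N i ^ 2 + G.incr Q N i) := by
      rw [mul_sum]; exact sum_congr rfl fun i _ => by ring
    _ ≤ 3 * M * (2 * Q t + 1) * ε := by
      nlinarith [mul_nonneg hM0 hε.le]

end HasQV

/-- the pathwise Itô exponential `X_t = exp(Y_t − [Y]_t/2)`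
satisfies `X_t = 1 + ∫_0^t X_s dY_s` with the pathwise Itô integral realized
as a limit of nonanticipative Riemann sums. -/
theorem stmt7 (G : GridSeq) (Y Q : ℝ → ℝ)
    (hY : ContinuousOn Y (Set.Ici 0)) (hY0 : Y 0 = 0) (hQ : HasQV G Y Q) :
    ∀ t ≥ 0, ConvTo G
      (fun u v => Real.exp (Y u - Q u / 2) * (Y v - Y u)) t
      (Real.exp (Y t - Q t / 2) - 1) := by
  intro t ht
  set X : ℝ → ℝ := fun s => exp (Y s - Q s / 2)
  have hX : ContinuousOn X (Ici 0) := continuous_exp.comp_continuousOn (hY.sub (hQ.1.div_const 2))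
  have hX0 : X 0 = 1 := by simp [X, hY0, hQ.2.1]
  have hsplit (N : ℕ) : gridSum (G.T N) (fun u v => X u * (Y v - Y u)) t
      = (X (G.T N (G.lastIndex N t)) - 1)
        - (∑ i ∈ range (G.lastIndex N t), X (G.T N i) * (G.incr Y N i ^ 2 - G.incr Q N i)) / 2
        + ∑ i ∈ range (G.lastIndex N t),
            X (G.T N i) * itoRemainder (G.incr Y N i) (G.incr Q N i) := by
    rw [G.gridSum_eq_sum, sum_congr rfl fun i _ => exp_mul_sub_eq (Y (G.T N i)) (Y (G.T N (i + 1)))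
      (Q (G.T N i)) (Q (G.T N (i + 1))), sum_add_distrib, sum_sub_distrib,
      sum_range_sub (fun i => X (G.T N i)), sum_div, G.zero, hX0]
    rfl
  have hlim := (((G.tendsto_comp_T_lastIndex (hX t ht) ht).sub_const 1).sub
    ((hQ.tendsto_sum_mul_sq_sub_incr (hX.mono Icc_subset_Ici_self) ht).div_const 2)).add
    (hQ.tendsto_sum_mul_itoRemainder (hX.mono Icc_subset_Ici_self) (hY.mono Icc_subset_Ici_self) ht)
  rw [zero_div, sub_zero, add_zero] at hlim
  exact hlim.congr fun N => (hsplit N).symm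
end

section
/- (Integration by parts for a QV path and an FV path) Let X be continuous with continuous quadratic variation [X] along grids (T_N), and let A be continuous and locally of finite variation. Then the pathwise Itô integral ∫_0^t A_s dX_s exists along (T_N), and X_t A_t − X_0 A_0 = ∫_0^t A_s dX_s + ∫_0^t X_s dA_s for all t ≥ 0, where the second integral is a Riemann–Stieltjes integral; no covariation correction term appears. -/
open Filter Topology Set MeasureTheory

open Finset in
lemma abs_sum_mul_le_of_abs_le {ι : Type*} {s : Finset ι} {f g : ι → ℝ} {ε : ℝ}
    (hf : ∀ i ∈ s, |f i| ≤ ε) : |∑ i ∈ s, f i * g i| ≤ ε * ∑ i ∈ s, |g i| := by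
  rw [mul_sum]
  refine (abs_sum_le_sum_abs _ _).trans (sum_le_sum fun i hi => ?_)
  rw [abs_mul]
  exact mul_le_mul_of_nonneg_right (hf i hi) (abs_nonneg _)

open Finset in
lemma abs_sum_sub_sum_blocks_le {x a : ℕ → ℝ} {σ : ℕ → ℕ} (hσ : Monotone σ) (hσ0 : σ 0 = 0)
    {ε : ℝ} (hx : ∀ i, ∀ j ∈ Finset.Ico (σ i) (σ (i + 1)), |x j - x (σ i)| ≤ ε) (n : ℕ) :
    |∑ j ∈ range (σ n), x j * (a (j + 1) - a j)
        - ∑ i ∈ range n, x (σ i) * (a (σ (i + 1)) - a (σ i))|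
      ≤ ε * ∑ j ∈ range (σ n), |a (j + 1) - a j| := by
  induction n with
  | zero => simp [hσ0]
  | succ n ih =>
    have hσn : σ n ≤ σ (n + 1) := hσ n.le_succ
    have hblock : ∑ j ∈ Finset.Ico (σ n) (σ (n + 1)), x j * (a (j + 1) - a j)
          - x (σ n) * (a (σ (n + 1)) - a (σ n))
        = ∑ j ∈ Finset.Ico (σ n) (σ (n + 1)), (x j - x (σ n)) * (a (j + 1) - a j) := by
      rw [← sum_Ico_sub a hσn, mul_sum, ← sum_sub_distrib]
      simp only [sub_mul]
    rw [← sum_range_add_sum_Ico _ hσn, ← sum_range_add_sum_Ico _ hσn, sum_range_succ, mul_add]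
    calc _ = |(∑ j ∈ range (σ n), x j * (a (j + 1) - a j)
              - ∑ i ∈ range n, x (σ i) * (a (σ (i + 1)) - a (σ i)))
            + ∑ j ∈ Finset.Ico (σ n) (σ (n + 1)), (x j - x (σ n)) * (a (j + 1) - a j)| := by
          rw [← hblock]; congr 1; ring
      _ ≤ _ := (abs_add_le _ _).trans (add_le_add ih (abs_sum_mul_le_of_abs_le (hx n)))

open Finset in
lemma abs_sum_sub_sum_blocks_sub_tail_le {x a : ℕ → ℝ} {σ : ℕ → ℕ} (hσ : Monotone σ)
    (hσ0 : σ 0 = 0) {K L : ℕ} (hKL : σ K ≤ L) (hLK : L ≤ σ (K + 1)) {ε : ℝ}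
    (hx : ∀ i, ∀ j ∈ Finset.Ico (σ i) (σ (i + 1)), j < L → |x j - x (σ i)| ≤ ε) :
    |∑ j ∈ range L, x j * (a (j + 1) - a j)
        - ∑ i ∈ range K, x (σ i) * (a (σ (i + 1)) - a (σ i)) - x (σ K) * (a L - a (σ K))|
      ≤ ε * ∑ j ∈ range L, |a (j + 1) - a j| := by
  -- the blocks of `σ` cut off at `L`: `K` full blocks and the partial block `[σ K, L)`
  set τ : ℕ → ℕ := fun i => min (σ i) L
  have hτ : Monotone τ := fun i j h => min_le_min_right L (hσ h)
  have hτK : τ (K + 1) = L := min_eq_right hLK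
  have hτσ : ∀ i ≤ K, τ i = σ i := fun i hi => min_eq_left ((hσ hi).trans hKL)
  have hτx : ∀ i, ∀ j ∈ Finset.Ico (τ i) (τ (i + 1)), |x j - x (τ i)| ≤ ε := by
    intro i j hj
    simp only [τ, Finset.mem_Ico, lt_min_iff, min_le_iff] at hj
    have hij : σ i ≤ j := by omega
    rw [show τ i = σ i from min_eq_left (by omega)]
    exact hx i j (Finset.mem_Ico.2 ⟨hij, hj.2.1⟩) hj.2.2
  have key := abs_sum_sub_sum_blocks_le hτ (by simp [τ, hσ0]) hτx (a := a) (K + 1)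
  have hfull : ∑ i ∈ range K, x (τ i) * (a (τ (i + 1)) - a (τ i))
      = ∑ i ∈ range K, x (σ i) * (a (σ (i + 1)) - a (σ i)) :=
    sum_congr rfl fun i hi => by rw [hτσ i (mem_range.1 hi).le, hτσ (i + 1) (mem_range.1 hi)]
  rwa [hτK, sum_range_succ, hτK, hτσ K le_rfl, hfull, ← sub_sub] at key

namespace GridSeq

variable (G : GridSeq)

lemma exists_lt_T (t : ℝ) (N : ℕ) : ∃ m, t < G.T N m :=
  ((G.unbounded N).eventually_gt_atTop t).exists

/-- The index of the last point of the `N`-th grid that is `≤ t`; it is `0` when `t < 0`. -/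
noncomputable def lastIdx (t : ℝ) (N : ℕ) : ℕ := Nat.find (G.exists_lt_T t N) - 1

variable {G} {t : ℝ}

lemma lt_T_lastIdx_succ (N : ℕ) : t < G.T N (G.lastIdx t N + 1) := by
  rcases Nat.eq_zero_or_pos (Nat.find (G.exists_lt_T t N)) with h | h
  · have h0 := Nat.find_spec (G.exists_lt_T t N)
    rw [h] at h0
    exact h0.trans (G.mono N (by omega))
  · simpa [lastIdx, Nat.sub_add_cancel h] using Nat.find_spec (G.exists_lt_T t N)

lemma T_lastIdx_le (ht : 0 ≤ t) (N : ℕ) : G.T N (G.lastIdx t N) ≤ t := by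
  rcases Nat.eq_zero_or_pos (Nat.find (G.exists_lt_T t N)) with h | h
  · simpa [lastIdx, h, G.zero] using ht
  · exact not_lt.1 (Nat.find_min (G.exists_lt_T t N) (by unfold lastIdx; omega))

lemma T_succ_le_iff_lt_lastIdx (ht : 0 ≤ t) {N i : ℕ} :
    G.T N (i + 1) ≤ t ↔ i < G.lastIdx t N := by
  constructor
  · intro h
    by_contra! hi
    exact (G.lt_T_lastIdx_succ N).not_ge (((G.mono N).monotone (by omega)).trans h)
  · intro hi
    exact ((G.mono N).monotone (by omega)).trans (T_lastIdx_le ht N)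

lemma T_mem_Icc (ht : 0 ≤ t) {N i : ℕ} (hi : i ≤ G.lastIdx t N) : G.T N i ∈ Icc 0 t :=
  ⟨G.zero N ▸ (G.mono N).monotone i.zero_le, ((G.mono N).monotone hi).trans (T_lastIdx_le ht N)⟩

lemma gridSum_eq_sum_range (ht : 0 ≤ t) (f : ℝ → ℝ → ℝ) (N : ℕ) :
    gridSum (G.T N) f t = ∑ i ∈ Finset.range (G.lastIdx t N), f (G.T N i) (G.T N (i + 1)) := by
  rw [gridSum, tsum_eq_sum (s := Finset.range (G.lastIdx t N))]
  · exact Finset.sum_congr rfl fun i hi =>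
      if_pos ((T_succ_le_iff_lt_lastIdx ht).2 (Finset.mem_range.1 hi))
  · exact fun i hi => if_neg fun h => hi (Finset.mem_range.2 ((T_succ_le_iff_lt_lastIdx ht).1 h))

lemma tendsto_T_lastIdx (ht : 0 ≤ t) :
    Tendsto (fun N => G.T N (G.lastIdx t N)) atTop (𝓝[Icc 0 t] t) := by
  refine tendsto_nhdsWithin_of_tendsto_nhds_of_eventually_within _ ?_
    (Eventually.of_forall fun N => T_mem_Icc ht le_rfl)
  rw [Metric.tendsto_atTop]
  intro ε hε
  obtain ⟨N₀, hN₀⟩ := G.mesh (ε / 2) (half_pos hε)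
  refine ⟨N₀, fun N hN => ?_⟩
  have hmesh := hN₀ N hN (G.lastIdx t N)
  rw [Real.dist_eq, abs_sub_lt_iff]
  constructor <;> linarith [G.T_lastIdx_le ht N, G.lt_T_lastIdx_succ (t := t) N]

lemma sum_abs_sub_le_eVariationOn (ht : 0 ≤ t) {A : ℝ → ℝ}
    (hA : BoundedVariationOn A (Icc 0 t)) (N : ℕ) :
    ∑ i ∈ Finset.range (G.lastIdx t N), |A (G.T N (i + 1)) - A (G.T N i)|
      ≤ (eVariationOn A (Icc 0 t)).toReal := by
  have h := eVariationOn.sum_le_of_monotoneOn_Iic (f := A) (n := G.lastIdx t N)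
    ((G.mono N).monotone.monotoneOn _) fun i hi => T_mem_Icc ht hi
  simp only [edist_dist, Real.dist_eq] at h
  rwa [← ENNReal.ofReal_sum_of_nonneg fun i _ => abs_nonneg _,
    ENNReal.ofReal_le_iff_le_toReal hA] at h

lemma range_T_subset {N M : ℕ} (h : N ≤ M) : range (G.T N) ⊆ range (G.T M) := by
  induction M, h using Nat.le_induction with
  | base => exact subset_rfl
  | succ M _ ih => exact ih.trans (G.nested M)

lemma exists_strictMono_T_comp_eq {N M : ℕ} (h : N ≤ M) :
    ∃ σ : ℕ → ℕ, σ 0 = 0 ∧ StrictMono σ ∧ ∀ i, G.T M (σ i) = G.T N i := by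
  choose σ hσ using fun i => range_T_subset h (mem_range_self (f := G.T N) i)
  refine ⟨σ, (G.mono M).injective ?_, fun i j hij => ?_, hσ⟩
  · rw [hσ, G.zero, G.zero]
  · exact (G.mono M).lt_iff_lt.1 (by rw [hσ, hσ]; exact G.mono N hij)

lemma _root_.ConvTo.sub (ht : 0 ≤ t) {f g : ℝ → ℝ → ℝ} {a b : ℝ} (hf : ConvTo G f t a)
    (hg : ConvTo G g t b) : ConvTo G (fun u v => f u v - g u v) t (a - b) := by
  unfold ConvTo at *
  simp_rw [gridSum_eq_sum_range ht, Finset.sum_sub_distrib] at hf hg ⊢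
  exact hf.sub hg

lemma convTo_sub_of_continuousWithinAt (ht : 0 ≤ t) {f : ℝ → ℝ}
    (hf : ContinuousWithinAt f (Icc 0 t) t) : ConvTo G (fun u v => f v - f u) t (f t - f 0) := by
  have htelescope : ∀ N, gridSum (G.T N) (fun u v => f v - f u) t
      = f (G.T N (G.lastIdx t N)) - f 0 := fun N => by
    rw [gridSum_eq_sum_range ht, Finset.sum_range_sub (fun i => f (G.T N i)), G.zero]
  simp only [ConvTo, htelescope]
  exact (hf.tendsto.comp (tendsto_T_lastIdx ht)).sub_const _

lemma convTo_covariation_zero (ht : 0 ≤ t) {X A : ℝ → ℝ} (hX : ContinuousOn X (Icc 0 t))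
    (hA : BoundedVariationOn A (Icc 0 t)) :
    ConvTo G (fun u v => (X v - X u) * (A v - A u)) t 0 := by
  set V := (eVariationOn A (Icc 0 t)).toReal
  have hXu := Metric.uniformContinuousOn_iff_le.1
    (isCompact_Icc.uniformContinuousOn_of_continuous hX)
  rw [ConvTo, Metric.tendsto_atTop]
  intro ε hε
  obtain ⟨δ, hδ, hXδ⟩ := hXu (ε / (V + 1)) (by positivity)
  obtain ⟨N₀, hN₀⟩ := G.mesh δ hδ
  refine ⟨N₀, fun N hN => ?_⟩
  have hosc : ∀ i ∈ Finset.range (G.lastIdx t N),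
      |X (G.T N (i + 1)) - X (G.T N i)| ≤ ε / (V + 1) := by
    intro i hi
    have hi := Finset.mem_range.1 hi
    rw [← Real.dist_eq]
    refine hXδ _ (T_mem_Icc ht hi) _ (T_mem_Icc ht hi.le) ?_
    rw [Real.dist_eq, abs_of_nonneg (sub_nonneg.2 ((G.mono N).monotone i.le_succ))]
    exact hN₀ N hN i
  rw [Real.dist_eq, sub_zero, gridSum_eq_sum_range ht]
  calc _ ≤ ε / (V + 1) * V := (abs_sum_mul_le_of_abs_le hosc).trans
        (mul_le_mul_of_nonneg_left (sum_abs_sub_le_eVariationOn ht hA N) (by positivity))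
    _ < ε := by rw [div_mul_eq_mul_div, div_lt_iff₀ (by positivity)]; linarith

lemma abs_gridSum_stieltjes_sub_le (ht : 0 ≤ t) {X A : ℝ → ℝ} {N M : ℕ} (hNM : N ≤ M)
    {δ ε C : ℝ} (hε : 0 ≤ ε) (hmesh : ∀ i, G.T N (i + 1) - G.T N i ≤ δ)
    (hXδ : ∀ u ∈ Icc 0 t, ∀ v ∈ Icc 0 t, dist u v ≤ δ → dist (X u) (X v) ≤ ε)
    (hAδ : ∀ u ∈ Icc 0 t, ∀ v ∈ Icc 0 t, dist u v ≤ δ → dist (A u) (A v) ≤ ε)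
    (hC : ∀ u ∈ Icc 0 t, |X u| ≤ C) (hA : BoundedVariationOn A (Icc 0 t)) :
    |gridSum (G.T M) (fun u v => X u * (A v - A u)) t
        - gridSum (G.T N) (fun u v => X u * (A v - A u)) t|
      ≤ ε * (eVariationOn A (Icc 0 t)).toReal + C * ε := by
  obtain ⟨σ, hσ0, hσ, hTσ⟩ := exists_strictMono_T_comp_eq (G := G) hNM
  set K := G.lastIdx t N
  set L := G.lastIdx t M
  have hK : G.T N K ∈ Icc 0 t := T_mem_Icc ht le_rfl
  have hL : G.T M L ∈ Icc 0 t := T_mem_Icc ht le_rfl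
  have hKL : σ K ≤ L := by
    by_contra! h
    have h' := (G.mono M).monotone h
    rw [hTσ] at h'
    exact (G.lt_T_lastIdx_succ M).not_ge (h'.trans hK.2)
  have hLK : L ≤ σ (K + 1) :=
    (G.mono M).le_iff_le.1 (hL.2.trans (hTσ (K + 1) ▸ G.lt_T_lastIdx_succ N).le)
  have hx : ∀ i, ∀ j ∈ Finset.Ico (σ i) (σ (i + 1)), j < L →
      |X (G.T M j) - X (G.T M (σ i))| ≤ ε := by
    intro i j hj hjL
    rw [Finset.mem_Ico] at hj
    have hj' : G.T M j ∈ Icc 0 t := T_mem_Icc ht hjL.le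
    have h1 : G.T N i ≤ G.T M j := hTσ i ▸ (G.mono M).monotone hj.1
    have h2 : G.T M j < G.T N (i + 1) := hTσ (i + 1) ▸ G.mono M hj.2
    have hi : G.T N i ∈ Icc 0 t := ⟨G.zero N ▸ (G.mono N).monotone i.zero_le, h1.trans hj'.2⟩
    rw [hTσ, ← Real.dist_eq]
    refine hXδ _ hj' _ hi ?_
    rw [Real.dist_eq, abs_of_nonneg (by linarith)]
    linarith [hmesh i]
  have hblocks := abs_sum_sub_sum_blocks_sub_tail_le (x := fun j => X (G.T M j))
    (a := fun j => A (G.T M j)) hσ.monotone hσ0 hKL hLK hx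
  simp only [hTσ] at hblocks
  have htail : |X (G.T N K) * (A (G.T M L) - A (G.T N K))| ≤ C * ε := by
    have h1 : G.T N K ≤ G.T M L := hTσ K ▸ (G.mono M).monotone hKL
    have h2 : |A (G.T M L) - A (G.T N K)| ≤ ε := by
      rw [← Real.dist_eq]
      refine hAδ _ hL _ hK ?_
      rw [Real.dist_eq, abs_of_nonneg (by linarith)]
      have h3 : t < G.T N (K + 1) := G.lt_T_lastIdx_succ N
      linarith [hmesh K, hL.2]
    rw [abs_mul]
    exact mul_le_mul (hC _ hK) h2 (abs_nonneg _) ((abs_nonneg _).trans (hC _ hK))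
  rw [gridSum_eq_sum_range ht, gridSum_eq_sum_range ht]
  set D := ∑ i ∈ Finset.range L, X (G.T M i) * (A (G.T M (i + 1)) - A (G.T M i))
    - ∑ i ∈ Finset.range K, X (G.T N i) * (A (G.T N (i + 1)) - A (G.T N i))
  calc |D| = |(D - X (G.T N K) * (A (G.T M L) - A (G.T N K)))
          + X (G.T N K) * (A (G.T M L) - A (G.T N K))| := by rw [sub_add_cancel]
    _ ≤ ε * ∑ j ∈ Finset.range L, |A (G.T M (j + 1)) - A (G.T M j)| + C * ε :=
        (abs_add_le _ _).trans (add_le_add hblocks htail)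
    _ ≤ ε * (eVariationOn A (Icc 0 t)).toReal + C * ε := by
        gcongr
        exact sum_abs_sub_le_eVariationOn ht hA M

lemma cauchySeq_gridSum_stieltjes (ht : 0 ≤ t) {X A : ℝ → ℝ} (hX : ContinuousOn X (Icc 0 t))
    (hAc : ContinuousOn A (Icc 0 t)) (hA : BoundedVariationOn A (Icc 0 t)) :
    CauchySeq fun N => gridSum (G.T N) (fun u v => X u * (A v - A u)) t := by
  obtain ⟨C, hC⟩ := isCompact_Icc.exists_bound_of_continuousOn hX
  have hC0 : 0 ≤ C := (norm_nonneg _).trans (hC 0 ⟨le_rfl, ht⟩)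
  set V := (eVariationOn A (Icc 0 t)).toReal
  have hXu := Metric.uniformContinuousOn_iff_le.1
    (isCompact_Icc.uniformContinuousOn_of_continuous hX)
  have hAu := Metric.uniformContinuousOn_iff_le.1
    (isCompact_Icc.uniformContinuousOn_of_continuous hAc)
  rw [Metric.cauchySeq_iff']
  intro ε hε
  set ε' := ε / (V + C + 1)
  have hε' : 0 < ε' := by positivity
  obtain ⟨δ₁, hδ₁, hXδ⟩ := hXu ε' hε'
  obtain ⟨δ₂, hδ₂, hAδ⟩ := hAu ε' hε'
  obtain ⟨N₀, hN₀⟩ := G.mesh (min δ₁ δ₂) (lt_min hδ₁ hδ₂)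
  refine ⟨N₀, fun N hN => ?_⟩
  rw [Real.dist_eq]
  calc _ ≤ ε' * V + C * ε' := abs_gridSum_stieltjes_sub_le ht hN hε'.le (hN₀ N₀ le_rfl)
        (fun u hu v hv h => hXδ u hu v hv (h.trans (min_le_left _ _)))
        (fun u hu v hv h => hAδ u hu v hv (h.trans (min_le_right _ _)))
        hC hA
    _ < ε := by
        rw [← mul_comm ε', ← mul_add, div_mul_eq_mul_div, div_lt_iff₀ (by positivity)]
        linarith

end GridSeq

theorem stmt18_general (G : GridSeq) (X A : ℝ → ℝ)
    (hX : ContinuousOn X (Set.Ici 0))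
    (hA : ContinuousOn A (Set.Ici 0)) (hABV : LocBV A) :
    ∀ t ≥ 0, ∃ I J,
      ConvTo G (fun u v => A u * (X v - X u)) t I ∧
      ConvTo G (fun u v => X u * (A v - A u)) t J ∧
      X t * A t - X 0 * A 0 = I + J := by
  intro t ht
  have hXt : ContinuousOn X (Icc 0 t) := hX.mono Icc_subset_Ici_self
  have hAt : ContinuousOn A (Icc 0 t) := hA.mono Icc_subset_Ici_self
  have hBV : BoundedVariationOn A (Icc 0 t) :=
    (hABV (max t 1) (by positivity)).mono (Icc_subset_Icc_right (le_max_left t 1))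
  obtain ⟨J, hJ⟩ := cauchySeq_tendsto_of_complete (G.cauchySeq_gridSum_stieltjes ht hXt hAt hBV)
  have hXA : ConvTo G (fun u v => X v * A v - X u * A u) t (X t * A t - X 0 * A 0) :=
    G.convTo_sub_of_continuousWithinAt ht ((hXt.mul hAt).continuousWithinAt ⟨ht, le_rfl⟩)
  have hI := (hXA.sub ht hJ).sub ht (G.convTo_covariation_zero ht hXt hBV)
  refine ⟨X t * A t - X 0 * A 0 - J, J, ?_, hJ, by ring⟩
  rw [← sub_zero (X t * A t - X 0 * A 0 - J)]
  convert hI using 3 with u v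
  ring

/-- integration by parts between a path with continuous
quadratic variation and a continuous path of locally finite variation; no
covariation correction term appears. -/
theorem stmt18 (G : GridSeq) (X Q A : ℝ → ℝ)
    (hX : ContinuousOn X (Set.Ici 0)) (hQ : HasQV G X Q)
    (hA : ContinuousOn A (Set.Ici 0)) (hABV : LocBV A) :
    ∀ t ≥ 0, ∃ I J,
      ConvTo G (fun u v => A u * (X v - X u)) t I ∧
      ConvTo G (fun u v => X u * (A v - A u)) t J ∧
      X t * A t - X 0 * A 0 = I + J :=
  stmt18_general G X A hX hA hABV
end
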